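/- There exists a three-player impartial game X such that X is a Q-game and X + X is an O-game; for example X = {1, 1+1}, the game whose two options are a Nim heap of size 1 and a sum of two Nim heaps of size 1. -/
import Mathlib


/-- Three-player impartial games: well-founded game trees. -/
inductive G3 : Type 1 where
  | mk : (ι : Type) → (ι → G3) → G3

namespace G3

/-- The index type of options (moves) of a game. -/
def moves : G3 → Type
  | mk ι _ => ι

/-- The option of a game corresponding to a move. -/
def moveFn : (g : G3) → moves g → G3
  | mk _ f => f

/-- Disjunctive sum: move in exactly one component. -/
noncomputable def add : G3 → G3 → G3 :=
  G3.rec (fun ι f ihf =>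
    G3.rec (fun κ g ihg =>
      mk (ι ⊕ κ) (fun x =>
        match x with
        | Sum.inl i => ihf i (mk κ g)
        | Sum.inr j => ihg j)))

/-- The four outcome types of a three-player impartial game. -/
inductive PType : Type
  | N | O | P | Q
deriving DecidableEq

open Classical in
/-- The type of a game: `N` iff some option is a `P`-game; `O` iff it has at least
one option and all options are `N`-games; `P` iff all options are `O`-games;
`Q` otherwise. -/
noncomputable def typ : G3 → PType
  | mk ι f =>
    if ∃ i, typ (f i) = PType.P then PType.N
    else if Nonempty ι ∧ ∀ i, typ (f i) = PType.N then PType.O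
    else if ∀ i, typ (f i) = PType.O then PType.P
    else PType.Q

/-- The Nim heap of size `n`: options are heaps of sizes `0, …, n-1`. -/
def nim : ℕ → G3
  | n => mk (Fin n) (fun i => nim i)
termination_by n => n
decreasing_by exact i.isLt

/-- The sum of `n` Nim heaps of size 1. -/
noncomputable def ones : ℕ → G3
  | 0 => nim 0
  | n + 1 => add (ones n) (nim 1)

/-- The game `{1, 1+1}` whose two options are a Nim heap of size 1 and the
sum of two Nim heaps of size 1. -/
noncomputable def ex12 : G3 :=
  mk Bool (fun b => if b then nim 1 else add (nim 1) (nim 1))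

lemma add_mk (ι κ f g) : add (mk ι f) (mk κ g) =
    mk (ι ⊕ κ) (fun x => match x with
      | Sum.inl i => add (f i) (mk κ g)
      | Sum.inr j => add (mk ι f) (g j)) := rfl

open Classical in
lemma typ_mk (ι f) : typ (mk ι f) =
    (if ∃ i, typ (f i) = PType.P then PType.N
    else if Nonempty ι ∧ ∀ i, typ (f i) = PType.N then PType.O
    else if ∀ i, typ (f i) = PType.O then PType.P
    else PType.Q) := by rw [typ]

lemma typ_N {ι f} (i : ι) (h : typ (f i) = PType.P) : typ (mk ι f) = PType.N := by
  rw [typ_mk, if_pos ⟨i, h⟩]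

lemma typ_O {ι f} (hne : Nonempty ι) (h : ∀ i, typ (f i) = PType.N) :
    typ (mk ι f) = PType.O := by
  rw [typ_mk, if_neg, if_pos ⟨hne, h⟩]
  rintro ⟨i, hi⟩; rw [h i] at hi; exact PType.noConfusion hi

lemma typ_P {ι f} (h : ∀ i, typ (f i) = PType.O) : typ (mk ι f) = PType.P := by
  rw [typ_mk, if_neg, if_neg, if_pos h]
  · rintro ⟨⟨i⟩, hN⟩; exact PType.noConfusion ((hN i).symm.trans (h i))
  · rintro ⟨i, hi⟩; rw [h i] at hi; exact PType.noConfusion hi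

lemma typ_Q {ι f} (hP : ∀ i, typ (f i) ≠ PType.P)
    (hN : ∃ i, typ (f i) ≠ PType.N) (hO : ∃ i, typ (f i) ≠ PType.O) :
    typ (mk ι f) = PType.Q := by
  rw [typ_mk, if_neg, if_neg, if_neg]
  · obtain ⟨i, hi⟩ := hO; exact fun h => hi (h i)
  · obtain ⟨i, hi⟩ := hN; rintro ⟨_, h⟩; exact hi (h i)
  · rintro ⟨i, hi⟩; exact hP i hi

/-- A surrogate for `nim 0` that is syntactically a `mk`. -/
def Z : G3 := mk (Fin 0) (fun i => nim i)

/-- A surrogate for `nim 1` that is syntactically built from `mk`. -/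
def U : G3 := mk (Fin 1) (fun _ => Z)

/-- A surrogate for `ex12` built from `mk`, `Z`, `U`. -/
noncomputable def E' : G3 := mk Bool (fun b => if b then U else add U U)

lemma nim0_eq : nim 0 = Z := by rw [nim]; rfl

lemma nim1_eq : nim 1 = U := by
  rw [nim]
  congr 1
  funext i
  have h : (i : ℕ) = 0 := by omega
  rw [h, nim0_eq]

lemma ex12_eq : ex12 = E' := by
  show mk Bool _ = mk Bool _
  congr 1
  funext b
  cases b
  · show add (nim 1) (nim 1) = add U U
    rw [nim1_eq]
  · show nim 1 = U
    exact nim1_eq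

/-- The element of `Fin 1`. -/
def i1 : Fin 1 := ⟨0, Nat.zero_lt_one⟩

lemma tZ : typ Z = PType.P := typ_P (fun i => i.elim0)

lemma tU : typ U = PType.N := typ_N i1 tZ

lemma tZZ : typ (add Z Z) = PType.P :=
  typ_P (fun i => by rcases i with i | i <;> exact i.elim0)

lemma tZZZl : typ (add (add Z Z) Z) = PType.P :=
  typ_P (fun i => by rcases i with (i | i) | i <;> exact i.elim0)

lemma tZZZr : typ (add Z (add Z Z)) = PType.P :=
  typ_P (fun i => by rcases i with i | (i | i) <;> exact i.elim0)

lemma tZU : typ (add Z U) = PType.N := typ_N (Sum.inr i1) tZZ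

lemma tUZ : typ (add U Z) = PType.N := typ_N (Sum.inl i1) tZZ

lemma tZ_ZU : typ (add Z (add Z U)) = PType.N := typ_N (Sum.inr (Sum.inr i1)) tZZZr

lemma tZ_UZ : typ (add Z (add U Z)) = PType.N := typ_N (Sum.inr (Sum.inl i1)) tZZZr

lemma tU_ZZ : typ (add U (add Z Z)) = PType.N := typ_N (Sum.inl i1) tZZZr

lemma tZZ_U : typ (add (add Z Z) U) = PType.N := typ_N (Sum.inr i1) tZZZl

lemma tZU_Z : typ (add (add Z U) Z) = PType.N := typ_N (Sum.inl (Sum.inr i1)) tZZZl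

lemma tUZ_Z : typ (add (add U Z) Z) = PType.N := typ_N (Sum.inl (Sum.inl i1)) tZZZl

lemma tUU : typ (add U U) = PType.O := by
  refine typ_O ⟨Sum.inl i1⟩ ?_
  rintro (i | i)
  · exact tZU
  · exact tUZ

lemma tZ_UU : typ (add Z (add U U)) = PType.O := by
  refine typ_O ⟨Sum.inr (Sum.inl i1)⟩ ?_
  rintro (i | (i | i))
  · exact i.elim0
  · exact tZ_ZU
  · exact tZ_UZ

lemma tUU_Z : typ (add (add U U) Z) = PType.O := by
  refine typ_O ⟨Sum.inl (Sum.inl i1)⟩ ?_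
  rintro ((i | i) | i)
  · exact tZU_Z
  · exact tUZ_Z
  · exact i.elim0

lemma tU_ZU : typ (add U (add Z U)) = PType.O := by
  refine typ_O ⟨Sum.inl i1⟩ ?_
  rintro (i | (i | i))
  · exact tZ_ZU
  · exact i.elim0
  · exact tU_ZZ

lemma tU_UZ : typ (add U (add U Z)) = PType.O := by
  refine typ_O ⟨Sum.inl i1⟩ ?_
  rintro (i | (i | i))
  · exact tZ_UZ
  · exact tU_ZZ
  · exact i.elim0

lemma tZU_U : typ (add (add Z U) U) = PType.O := by
  refine typ_O ⟨Sum.inr i1⟩ ?_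
  rintro ((i | i) | i)
  · exact i.elim0
  · exact tZZ_U
  · exact tZU_Z

lemma tUZ_U : typ (add (add U Z) U) = PType.O := by
  refine typ_O ⟨Sum.inr i1⟩ ?_
  rintro ((i | i) | i)
  · exact tZZ_U
  · exact i.elim0
  · exact tUZ_Z

lemma tU_UU : typ (add U (add U U)) = PType.P := by
  refine typ_P ?_
  rintro (i | (i | i))
  · exact tZ_UU
  · exact tU_ZU
  · exact tU_UZ

lemma tUU_U : typ (add (add U U) U) = PType.P := by
  refine typ_P ?_
  rintro ((i | i) | i)
  · exact tZU_U
  · exact tUZ_U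
  · exact tUU_Z

lemma tE' : typ E' = PType.Q := by
  refine typ_Q ?_ ⟨false, ?_⟩ ⟨true, ?_⟩
  · rintro (_ | _) h
    · exact PType.noConfusion (tUU.symm.trans (h : typ (add U U) = PType.P))
    · exact PType.noConfusion (tU.symm.trans (h : typ U = PType.P))
  · intro h
    exact PType.noConfusion (tUU.symm.trans (h : typ (add U U) = PType.N))
  · intro h
    exact PType.noConfusion (tU.symm.trans (h : typ U = PType.O))

lemma tUE : typ (add U E') = PType.N := typ_N (Sum.inr false) tU_UU

lemma tEU : typ (add E' U) = PType.N := typ_N (Sum.inl false) tUU_U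

lemma tUUE : typ (add (add U U) E') = PType.N := typ_N (Sum.inr true) tUU_U

lemma tEUU : typ (add E' (add U U)) = PType.N := typ_N (Sum.inl true) tU_UU

lemma tEE : typ (add E' E') = PType.O := by
  refine typ_O ⟨Sum.inl true⟩ ?_
  rintro (b | b) <;> cases b
  · exact tUUE
  · exact tUE
  · exact tEUU
  · exact tEU

theorem exists_Q_with_double_O :
    (typ ex12 = PType.Q ∧ typ (add ex12 ex12) = PType.O) ∧
    ∃ X : G3, typ X = PType.Q ∧ typ (add X X) = PType.O := by
  rw [ex12_eq]
  exact ⟨⟨tE', tEE⟩, E', tE', tEE⟩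

end G3
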